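/- arXiv:1906.08776 — 5 statements merged into one kernel-verified Lean document; each statement's English description precedes it below -/
import Mathlib

section
/- Let a ∈ (1/2, 1), r ∈ (0,1), q ∈ [0,1] with q > 1/2, f(q) = qa + (1−q)(1−a). For each n let N₁⁽ⁿ⁾ ~ Binomial(n, f(q)) and q̂ₙ^LA = 1/(1 + ((1−r)/r)·(a/(1−a))^{n − 2N₁⁽ⁿ⁾}). Then q̂ₙ^LA converges in probability to 1 as n → ∞. -/
open Finset Filter

lemma my_sum_pow (p q : ℝ) (n : ℕ) :
    ∑ k ∈ range (n+1), (n.choose k : ℝ) * p^k * q^(n-k) = (p+q)^n := by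
  rw [add_pow]
  exact Finset.sum_congr rfl (fun k _ => by ring)

lemma my_sum_k (p q : ℝ) (n : ℕ) :
    ∑ k ∈ range (n+1), (k:ℝ) * (n.choose k) * p^k * q^(n-k) = n * p * (p+q)^(n-1) := by
  cases n with
  | zero => simp
  | succ m =>
    rw [Finset.sum_range_succ']
    simp only [Nat.cast_zero, zero_mul, add_zero, Nat.succ_sub_succ]
    have key : ∀ k : ℕ, ((k:ℝ)+1) * (((m+1).choose (k+1)):ℝ) = ((m:ℝ)+1) * ((m.choose k):ℝ) := by
      intro k
      have h := congrArg (Nat.cast : ℕ → ℝ) (Nat.add_one_mul_choose_eq m k)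
      push_cast at h
      linarith [h]
    have h2 : ∑ k ∈ range (m+1), ((k:ℝ)+1) * (((m+1).choose (k+1)):ℝ) * p^(k+1) * q^(m-k)
        = ((m:ℝ)+1) * p * ∑ k ∈ range (m+1), (m.choose k : ℝ) * p^k * q^(m-k) := by
      rw [Finset.mul_sum]
      exact Finset.sum_congr rfl (fun k _ => by rw [key k]; ring)
    push_cast at h2 ⊢
    rw [h2, my_sum_pow]
    simp

lemma my_sum_kk (p q : ℝ) (n : ℕ) :
    ∑ k ∈ range (n+1), (k:ℝ) * ((k:ℝ)-1) * (n.choose k) * p^k * q^(n-k)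
      = n * ((n:ℝ)-1) * p^2 * (p+q)^(n-2) := by
  match n with
  | 0 => simp
  | 1 => simp [Finset.sum_range_succ]
  | (m+2) =>
    rw [Finset.sum_range_succ', Finset.sum_range_succ']
    norm_num
    rw [← my_sum_pow p q m, Finset.mul_sum]
    refine Finset.sum_congr rfl (fun k _ => ?_)
    have h1 := congrArg (Nat.cast : ℕ → ℝ) (Nat.add_one_mul_choose_eq (m+1) (k+1))
    have h2 := congrArg (Nat.cast : ℕ → ℝ) (Nat.add_one_mul_choose_eq m k)
    push_cast at h1 h2
    have hc : (((m+2).choose (k+1+1)):ℝ) * ((k:ℝ)+1+1) * ((k:ℝ)+1)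
        = ((m:ℝ)+2) * ((m:ℝ)+1) * ((m.choose k):ℝ) := by
      have e : (m+2).choose (k+1+1) = (m+1+1).choose (k+1+1) := by norm_num
      rw [e]
      nlinarith [h1, h2]
    rw [show m+2-(k+1+1) = m-k from by omega, show (k+1+1) = k+2 from rfl, pow_add]
    linear_combination (p^k * p^2 * q^(m-k)) * hc

lemma my_binom_var (f : ℝ) (n : ℕ) :
    ∑ k ∈ range (n+1), ((k:ℝ) - n*f)^2 * (n.choose k) * f^k * (1-f)^(n-k)
      = n * f * (1-f) := by
  have h0 := my_sum_pow f (1-f) n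
  have h1 := my_sum_k f (1-f) n
  have h2 := my_sum_kk f (1-f) n
  rw [show f + (1-f) = 1 by ring, one_pow] at h0 h1 h2
  have expand : ∀ k ∈ range (n+1), ((k:ℝ) - n*f)^2 * (n.choose k) * f^k * (1-f)^(n-k)
      = (k:ℝ)*((k:ℝ)-1) * (n.choose k) * f^k * (1-f)^(n-k)
        + (1 - 2*(n:ℝ)*f) * ((k:ℝ) * (n.choose k) * f^k * (1-f)^(n-k))
        + ((n:ℝ)*f)^2 * ((n.choose k : ℝ) * f^k * (1-f)^(n-k)) := by
    intro k _; ring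
  rw [Finset.sum_congr rfl expand, Finset.sum_add_distrib, Finset.sum_add_distrib,
    ← Finset.mul_sum, ← Finset.mul_sum, h0, h1, h2]
  ring

set_option maxHeartbeats 1000000 in
/-- When q > 1/2, the LA posterior converges in probability to 1. -/
theorem la_posterior_tendsto_one (a r q : ℝ) (ha : 1/2 < a) (ha1 : a < 1)
    (hr0 : 0 < r) (hr1 : r < 1) (hq0 : 0 ≤ q) (hq1 : q ≤ 1) (hq : 1/2 < q) :
    let f : ℝ := q * a + (1 - q) * (1 - a)
    ∀ ε > 0,
      Tendsto (fun n : ℕ =>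
        ∑ k ∈ Finset.range (n + 1),
          if |1 / (1 + ((1 - r) / r) * (a / (1 - a)) ^ ((n : ℤ) - 2 * (k : ℤ))) - 1| > ε then
            (n.choose k : ℝ) * f ^ k * (1 - f) ^ (n - k)
          else 0) atTop (nhds 0) := by
  intro f ε hε
  have hf_def : f = q * a + (1 - q) * (1 - a) := rfl
  have hf_lb : 1/2 < f := by rw [hf_def]; nlinarith
  have hf_ub : f < 1 := by rw [hf_def]; nlinarith
  have hf0 : 0 < f := by linarith
  have hf1 : 0 < 1 - f := by linarith
  have ha0 : 0 < 1 - a := by linarith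
  set c : ℝ := (1 - r) / r with hc_def
  have hc : 0 < c := div_pos (by linarith) hr0
  set b : ℝ := a / (1 - a) with hb_def
  have hb : 1 < b := (one_lt_div ha0).2 (by linarith)
  have hb0 : 0 < b := by linarith
  -- abs formula
  have habs : ∀ (m : ℤ), |1 / (1 + c * b ^ m) - 1| = c * b ^ m / (1 + c * b ^ m) := by
    intro m
    have hT : 0 < c * b ^ m := mul_pos hc (zpow_pos hb0 m)
    have h1T : 0 < 1 + c * b ^ m := by linarith
    have : 1 / (1 + c * b ^ m) - 1 = -(c * b ^ m / (1 + c * b ^ m)) := by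
      field_simp
      ring
    rw [this, abs_neg, abs_of_nonneg (le_of_lt (div_pos hT h1T))]
  have habs_lt1 : ∀ (m : ℤ), |1 / (1 + c * b ^ m) - 1| < 1 := by
    intro m
    rw [habs m]
    have hT : 0 < c * b ^ m := mul_pos hc (zpow_pos hb0 m)
    rw [div_lt_one (by linarith)]
    linarith
  rcases le_or_gt 1 ε with hε1 | hε1
  · -- ε ≥ 1 : every indicator vanishes
    have : (fun n : ℕ =>
        ∑ k ∈ Finset.range (n + 1),
          if |1 / (1 + c * b ^ ((n : ℤ) - 2 * (k : ℤ))) - 1| > ε then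
            (n.choose k : ℝ) * f ^ k * (1 - f) ^ (n - k)
          else 0) = fun _ => (0:ℝ) := by
      funext n
      refine Finset.sum_eq_zero (fun k _ => ?_)
      rw [if_neg]
      push_neg
      exact le_trans (le_of_lt (habs_lt1 _)) hε1
    rw [this]
    exact tendsto_const_nhds
  · -- ε < 1
    obtain ⟨δ, hδ_def⟩ : ∃ δ : ℝ, δ = ε / (c * (1 - ε)) := ⟨_, rfl⟩
    have hδ : 0 < δ := hδ_def ▸ div_pos hε (mul_pos hc (by linarith))
    obtain ⟨C, hC_def⟩ : ∃ C : ℝ, C = Real.logb b δ := ⟨_, rfl⟩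
    obtain ⟨θ, hθ_def⟩ : ∃ θ : ℝ, θ = (1/2 + f)/2 := ⟨_, rfl⟩
    have hθ1 : 1/2 < θ := by rw [hθ_def]; linarith
    have hθ2 : θ < f := by rw [hθ_def]; linarith
    have hfθ : 0 < f - θ := by linarith
    obtain ⟨K, hK_def⟩ : ∃ K : ℝ, K = f * (1 - f) / (f - θ)^2 := ⟨_, rfl⟩
    obtain ⟨N0, hN0⟩ := exists_nat_ge ((-C)/(2*θ - 1))
    apply squeeze_zero' (g := fun n : ℕ => K * (1 / n))
    · filter_upwards with n
      refine Finset.sum_nonneg (fun k _ => ?_)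
      split
      · positivity
      · exact le_refl 0
    · filter_upwards [eventually_ge_atTop (max N0 1)] with n hn
      have hn1 : 1 ≤ n := le_trans (le_max_right _ _) hn
      have hnN : N0 ≤ n := le_trans (le_max_left _ _) hn
      have hnR : (0:ℝ) < n := by exact_mod_cast Nat.lt_of_lt_of_le Nat.zero_lt_one hn1
      have hnC : (n:ℝ) * (2*θ - 1) ≥ -C := by
        have : ((-C)/(2*θ - 1)) ≤ (n:ℝ) := le_trans hN0 (by exact_mod_cast hnN)
        calc -C = ((-C)/(2*θ - 1)) * (2*θ - 1) :=
              (div_mul_cancel₀ (-C) (by linarith : (2*θ - 1) ≠ 0)).symm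
          _ ≤ (n:ℝ) * (2*θ - 1) := mul_le_mul_of_nonneg_right this (by linarith)
      -- termwise bound
      have hterm : ∀ k ∈ range (n+1),
          (if |1 / (1 + c * b ^ ((n : ℤ) - 2 * (k : ℤ))) - 1| > ε then
            (n.choose k : ℝ) * f ^ k * (1 - f) ^ (n - k) else 0)
          ≤ ((k:ℝ) - n*f)^2 * (n.choose k) * f^k * (1-f)^(n-k) / ((f-θ)^2 * (n:ℝ)^2) := by
        intro k _
        split
        case isTrue hcond =>
          -- from the condition derive k < θ n
          rw [habs ((n : ℤ) - 2 * (k : ℤ))] at hcond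
          obtain ⟨m, hm_def⟩ : ∃ m : ℤ, m = (n : ℤ) - 2 * (k : ℤ) := ⟨_, rfl⟩
          rw [← hm_def] at hcond
          have hT : 0 < c * b ^ m := mul_pos hc (zpow_pos hb0 m)
          have hTδ : δ < b ^ m := by
            have h2 : ε * (1 + c * b ^ m) < c * b ^ m :=
              (lt_div_iff₀ (by linarith)).1 hcond
            rw [hδ_def, div_lt_iff₀ (mul_pos hc (by linarith))]
            linarith [h2]
          have hlogb : C < (m : ℝ) := by
            have := Real.logb_lt_logb hb hδ hTδ
            rw [hC_def]
            rwa [show Real.logb b (b ^ m) = (m:ℝ) by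
              rw [Real.logb, Real.log_zpow, mul_div_assoc,
                div_self (ne_of_gt (Real.log_pos hb)), mul_one]] at this
          have hmval : (m : ℝ) = (n : ℝ) - 2 * (k : ℝ) := by
            rw [hm_def]; push_cast; ring
          have hkθ : (k : ℝ) < θ * n := by
            rw [hmval] at hlogb
            linarith [hlogb, hnC]
          have hsq : ((f - θ) * (n:ℝ))^2 ≤ ((k:ℝ) - n*f)^2 := by
            have h1 : (f - θ) * n < (n:ℝ)*f - k := by linarith [hkθ]
            have h2 : 0 ≤ (f - θ) * n := (mul_pos hfθ hnR).le
            rw [show ((k:ℝ) - n*f)^2 = ((n:ℝ)*f - k)^2 by ring]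
            exact pow_le_pow_left₀ h2 h1.le 2
          have hpmf : (0:ℝ) ≤ (n.choose k : ℝ) * f ^ k * (1 - f) ^ (n - k) := by positivity
          rw [le_div_iff₀ (by positivity)]
          calc (n.choose k : ℝ) * f ^ k * (1 - f) ^ (n - k) * ((f-θ)^2 * (n:ℝ)^2)
              = ((f - θ) * (n:ℝ))^2 * ((n.choose k : ℝ) * f ^ k * (1 - f) ^ (n - k)) := by ring
            _ ≤ ((k:ℝ) - n*f)^2 * ((n.choose k : ℝ) * f ^ k * (1 - f) ^ (n - k)) :=
                mul_le_mul_of_nonneg_right hsq hpmf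
            _ = ((k:ℝ) - n*f)^2 * (n.choose k) * f^k * (1-f)^(n-k) := by ring
        case isFalse =>
          positivity
      calc (∑ k ∈ Finset.range (n + 1),
            if |1 / (1 + c * b ^ ((n : ℤ) - 2 * (k : ℤ))) - 1| > ε then
              (n.choose k : ℝ) * f ^ k * (1 - f) ^ (n - k) else 0)
          ≤ ∑ k ∈ range (n+1),
              ((k:ℝ) - n*f)^2 * (n.choose k) * f^k * (1-f)^(n-k) / ((f-θ)^2 * (n:ℝ)^2) :=
            Finset.sum_le_sum hterm
        _ = (∑ k ∈ range (n+1), ((k:ℝ) - n*f)^2 * (n.choose k) * f^k * (1-f)^(n-k))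
              / ((f-θ)^2 * (n:ℝ)^2) := by rw [Finset.sum_div]
        _ = (n:ℝ) * f * (1-f) / ((f-θ)^2 * (n:ℝ)^2) := by rw [my_binom_var]
        _ = K * (1 / n) := by
            rw [hK_def]
            field_simp
    · have := tendsto_one_div_atTop_nhds_zero_nat.const_mul K
      simpa using this
end

section
/- Let a ∈ (1/2, 1), r ∈ (0,1), q ∈ [0,1] with q < 1/2, f(q) = qa + (1−q)(1−a). For each n let N₁⁽ⁿ⁾ ~ Binomial(n, f(q)) and q̂ₙ^LA = 1/(1 + ((1−r)/r)·(a/(1−a))^{n − 2N₁⁽ⁿ⁾}). Then q̂ₙ^LA converges in probability to 0 as n → ∞. -/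
/-!
The posterior exceeds `ε` only when the exponent `n - 2N` stays below a constant, i.e. on the
event `N ≥ n / 2 - O(1)`. Since `N ~ Bin(n, f)` has mean `n f` with `f < 1 / 2` and variance
`n f (1 - f)`, Chebyshev's inequality bounds the probability of that event by `O(1 / n)`.
-/

open Finset Filter Topology

def binomialWeight (n : ℕ) (p : ℝ) (k : ℕ) : ℝ :=
  n.choose k * p ^ k * (1 - p) ^ (n - k)

lemma binomialWeight_nonneg {p : ℝ} (hp0 : 0 ≤ p) (hp1 : p ≤ 1) (n k : ℕ) :
    0 ≤ binomialWeight n p k := by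
  have : 0 ≤ 1 - p := sub_nonneg.2 hp1
  unfold binomialWeight
  positivity

lemma sum_sq_sub_mul_binomialWeight (n : ℕ) (p : ℝ) :
    ∑ k ∈ range (n + 1), (k - n * p) ^ 2 * binomialWeight n p k = n * p * (1 - p) := by
  have hvar := congrArg (Polynomial.eval p) (bernsteinPolynomial.variance ℝ n)
  simp only [Polynomial.eval_finsetSum, Polynomial.eval_mul, Polynomial.eval_pow,
    Polynomial.eval_sub, Polynomial.eval_X, Polynomial.eval_natCast,
    Polynomial.eval_one, bernsteinPolynomial, nsmul_eq_mul] at hvar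
  rw [← hvar]
  refine sum_congr rfl fun k _ => ?_
  simp only [binomialWeight]
  ring

lemma sum_binomialWeight_filter_le {p δ x : ℝ} (hp0 : 0 ≤ p) (hp1 : p ≤ 1) (hδ : 0 < δ)
    {n : ℕ} (hx : n * p + δ ≤ x) :
    ∑ k ∈ range (n + 1) with x ≤ ((k : ℕ) : ℝ), binomialWeight n p k ≤
      n * p * (1 - p) / δ ^ 2 := by
  rw [le_div_iff₀ (by positivity), ← sum_sq_sub_mul_binomialWeight, sum_mul]
  calc ∑ k ∈ range (n + 1) with x ≤ ((k : ℕ) : ℝ), binomialWeight n p k * δ ^ 2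
      ≤ ∑ k ∈ range (n + 1) with x ≤ ((k : ℕ) : ℝ), (k - n * p) ^ 2 * binomialWeight n p k := by
        refine sum_le_sum fun k hk => ?_
        have hδk : δ ≤ k - n * p := by linarith [(mem_filter.1 hk).2]
        rw [mul_comm]
        gcongr
        exact binomialWeight_nonneg hp0 hp1 n k
    _ ≤ ∑ k ∈ range (n + 1), (k - n * p) ^ 2 * binomialWeight n p k :=
        sum_le_sum_of_subset_of_nonneg (filter_subset _ _)
          fun k _ _ => mul_nonneg (sq_nonneg _) (binomialWeight_nonneg hp0 hp1 n k)

theorem tendsto_sum_binomialWeight_filter {p β : ℝ} (hp0 : 0 ≤ p) (hp1 : p ≤ 1) (hpβ : p < β)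
    (c : ℝ) :
    Tendsto (fun n : ℕ =>
      ∑ k ∈ range (n + 1) with β * n - c ≤ ((k : ℕ) : ℝ), binomialWeight n p k) atTop (𝓝 0) := by
  have hβp : 0 < β - p := sub_pos.2 hpβ
  refine squeeze_zero' (Eventually.of_forall fun n =>
      sum_nonneg fun k _ => binomialWeight_nonneg hp0 hp1 n k) ?_
    (tendsto_const_div_atTop_nhds_zero_nat (4 * p * (1 - p) / (β - p) ^ 2))
  filter_upwards [eventually_ge_atTop 1,
    tendsto_natCast_atTop_atTop.eventually_ge_atTop (2 * c / (β - p))] with n hn hcn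
  have hn : (0 : ℝ) < n := by exact_mod_cast hn
  -- Chebyshev with the margin `δ = (β - p) n / 2`, which `c` does not eat once `n` is large.
  have hc : c ≤ (β - p) * n / 2 := by
    rw [div_le_iff₀ hβp] at hcn
    linarith
  calc _ ≤ n * p * (1 - p) / ((β - p) * n / 2) ^ 2 :=
        sum_binomialWeight_filter_le hp0 hp1 (by positivity) (by linarith)
    _ = 4 * p * (1 - p) / (β - p) ^ 2 / n := by
        field_simp
        ring

lemma bddAbove_setOf_lt_one_div_one_add_mul_zpow {C R ε : ℝ} (hC : 0 < C) (hR : 1 < R)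
    (hε : 0 < ε) : BddAbove {d : ℤ | ε < 1 / (1 + C * R ^ d)} := by
  obtain ⟨m, hm⟩ := pow_unbounded_of_one_lt ((1 - ε) / (ε * C)) hR
  refine ⟨m, fun d hd => ?_⟩
  have hRd : 0 < R ^ d := zpow_pos (by linarith) d
  replace hd : ε * (1 + C * R ^ d) < 1 := (lt_div_iff₀ (by positivity)).1 hd
  have hlt : R ^ d < R ^ (m : ℤ) := by
    rw [zpow_natCast]
    refine lt_trans ?_ hm
    rw [lt_div_iff₀ (by positivity)]
    linarith
  exact ((zpow_lt_zpow_iff_right₀ hR).1 hlt).le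

theorem la_posterior_tendsto_zero_general (a r q : ℝ) (ha : 1/2 < a) (ha1 : a < 1)
    (hr0 : 0 < r) (hr1 : r < 1) (hq0 : 0 ≤ q) (hq : q < 1/2) :
    let f : ℝ := q * a + (1 - q) * (1 - a)
    ∀ ε > 0,
      Tendsto (fun n : ℕ =>
        ∑ k ∈ Finset.range (n + 1),
          if |1 / (1 + ((1 - r) / r) * (a / (1 - a)) ^ ((n : ℤ) - 2 * (k : ℤ))) - 0| > ε then
            (n.choose k : ℝ) * f ^ k * (1 - f) ^ (n - k)
          else 0) atTop (nhds 0) := by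
  intro f ε hε
  have hf0 : 0 ≤ f :=
    add_nonneg (mul_nonneg hq0 (by linarith)) (mul_nonneg (by linarith) (by linarith))
  have hf : f < 1 / 2 := by nlinarith
  obtain ⟨m, hm⟩ := bddAbove_setOf_lt_one_div_one_add_mul_zpow
    (C := (1 - r) / r) (R := a / (1 - a)) (div_pos (sub_pos.2 hr1) hr0)
    ((one_lt_div (sub_pos.2 ha1)).2 (by linarith)) hε
  have hnonneg := binomialWeight_nonneg hf0 (by linarith)
  refine squeeze_zero (fun n => sum_nonneg fun k _ => ite_nonneg (hnonneg n k) le_rfl)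
    (fun n => ?_) (tendsto_sum_binomialWeight_filter hf0 (by linarith) hf (m / 2))
  rw [← sum_filter]
  refine sum_le_sum_of_subset_of_nonneg (fun k hk => ?_) fun k _ _ => hnonneg n k
  obtain ⟨hk, hpost⟩ := mem_filter.1 hk
  rw [sub_zero, abs_of_pos (by positivity)] at hpost
  have : (n : ℝ) - 2 * k ≤ m := by exact_mod_cast hm hpost
  exact mem_filter.2 ⟨hk, by linarith⟩

/-- When q < 1/2, the LA posterior converges in probability to 0. -/
theorem la_posterior_tendsto_zero (a r q : ℝ) (ha : 1/2 < a) (ha1 : a < 1)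
    (hr0 : 0 < r) (hr1 : r < 1) (hq0 : 0 ≤ q) (hq1 : q ≤ 1) (hq : q < 1/2) :
    let f : ℝ := q * a + (1 - q) * (1 - a)
    ∀ ε > 0,
      Tendsto (fun n : ℕ =>
        ∑ k ∈ Finset.range (n + 1),
          if |1 / (1 + ((1 - r) / r) * (a / (1 - a)) ^ ((n : ℤ) - 2 * (k : ℤ))) - 0| > ε then
            (n.choose k : ℝ) * f ^ k * (1 - f) ^ (n - k)
          else 0) atTop (nhds 0) :=
  la_posterior_tendsto_zero_general a r q ha ha1 hr0 hr1 hq0 hq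
end

section
/- Let a ∈ (1/2, 1) and let n₁, n be naturals with n₁ ≤ n. The function g(p) = n₁·log(p·a + (1−p)(1−a)) + (n−n₁)·log(p(1−a) + (1−p)a) on [0,1] is strictly concave, and if (1−a) ≤ n₁/n ≤ a its unique maximizer on [0,1] is p* = (n₁/n − (1−a))/(2a−1). -/
set_option maxHeartbeats 1000000

open Real Set

lemma aux_strictConcave (s t c : ℝ) (hc : 0 < c) (hst : s ≠ t) (hs : 0 < s) (ht : 0 < t) :
    StrictConcaveOn ℝ (Set.Icc (0:ℝ) 1) (fun p => c * Real.log (p * s + (1 - p) * t)) := by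
  have hpos : ∀ p ∈ Set.Icc (0:ℝ) 1, 0 < p * s + (1 - p) * t := by
    intro p hp
    obtain ⟨h0, h1⟩ := hp
    rcases le_total s t with hle | hle
    · nlinarith
    · nlinarith
  refine ⟨convex_Icc 0 1, ?_⟩
  intro x hx y hy hxy μ ν hμ hν hμν
  have hux := hpos x hx
  have huy := hpos y hy
  have hune : x * s + (1 - x) * t ≠ y * s + (1 - y) * t := by
    intro hcontra
    apply hxy
    have : (x - y) * (s - t) = 0 := by linarith
    rcases mul_eq_zero.1 this with h' | h'
    · linarith
    · exact absurd (by linarith) hst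
  have key := strictConcaveOn_log_Ioi.2 (Set.mem_Ioi.2 hux) (Set.mem_Ioi.2 huy) hune hμ hν hμν
  simp only [smul_eq_mul] at key ⊢
  have harg : (μ * x + ν * y) * s + (1 - (μ * x + ν * y)) * t
      = μ * (x * s + (1 - x) * t) + ν * (y * s + (1 - y) * t) := by
    have : μ + ν = 1 := hμν
    nlinarith [this]
  rw [harg]
  nlinarith [key]

/-- The D-assumption log-likelihood for one binary object is strictly concave on [0,1],
and when (1−a) ≤ n₁/n ≤ a its unique maximizer is p* = (n₁/n − (1−a))/(2a−1). -/
theorem da_loglik_concave_max (a : ℝ) (ha : 1/2 < a) (ha1 : a < 1)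
    (n n₁ : ℕ) (hn : 0 < n) (h : n₁ ≤ n) :
    let g : ℝ → ℝ := fun p =>
      (n₁ : ℝ) * Real.log (p * a + (1 - p) * (1 - a)) +
      ((n : ℝ) - n₁) * Real.log (p * (1 - a) + (1 - p) * a)
    StrictConcaveOn ℝ (Set.Icc (0:ℝ) 1) g ∧
    ((1 - a) ≤ (n₁ : ℝ) / n → (n₁ : ℝ) / n ≤ a →
      ∀ p ∈ Set.Icc (0:ℝ) 1, p ≠ ((n₁ : ℝ) / n - (1 - a)) / (2*a - 1) →
        g p < g (((n₁ : ℝ) / n - (1 - a)) / (2*a - 1))) := by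
  intro g
  have ha0 : 0 < 1 - a := by linarith
  have ha2 : 0 < 2*a - 1 := by linarith
  have hane : a ≠ 1 - a := by intro h'; linarith
  have hane' : (1 - a) ≠ a := by intro h'; linarith
  have hnR : (0:ℝ) < n := by exact_mod_cast hn
  -- strict concavity
  have hconc : StrictConcaveOn ℝ (Set.Icc (0:ℝ) 1) g := by
    rcases Nat.eq_zero_or_pos n₁ with h0 | hpos
    · have hg : g = fun p => (n:ℝ) * Real.log (p * (1 - a) + (1 - p) * a) := by
        funext p; simp [g, h0]
      rw [hg]
      exact aux_strictConcave (1-a) a (n:ℝ) hnR hane' ha0 (by linarith)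
    · rcases eq_or_lt_of_le h with heq | hlt
      · have hg : g = fun p => (n₁:ℝ) * Real.log (p * a + (1 - p) * (1 - a)) := by
          funext p; simp [g, heq]
        rw [hg]
        have : (0:ℝ) < n₁ := by exact_mod_cast hpos
        exact aux_strictConcave a (1-a) (n₁:ℝ) this hane (by linarith) ha0
      · have h1 : (0:ℝ) < n₁ := by exact_mod_cast hpos
        have h2 : (0:ℝ) < (n:ℝ) - n₁ := by
          have : (n₁:ℝ) < n := by exact_mod_cast hlt
          linarith
        exact (aux_strictConcave a (1-a) (n₁:ℝ) h1 hane (by linarith) ha0).add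
          (aux_strictConcave (1-a) a ((n:ℝ) - n₁) h2 hane' ha0 (by linarith))
  refine ⟨hconc, ?_⟩
  intro hlo hhi p hp hne
  set A : ℝ := (n₁ : ℝ) / n with hA
  set q : ℝ := (A - (1 - a)) / (2*a - 1) with hq
  have hApos : 0 < A := lt_of_lt_of_le ha0 hlo
  have hAlt : A < 1 := lt_of_le_of_lt hhi ha1
  have hn₁pos : (0:ℝ) < n₁ := by
    have := (div_pos_iff.1 (hA ▸ hApos))
    rcases this with ⟨h', _⟩ | ⟨_, h'⟩
    · exact h'
    · linarith
  have hn₁lt : (n₁:ℝ) < n := by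
    by_contra h'
    push_neg at h'
    have : 1 ≤ A := by rw [hA]; rw [le_div_iff₀ hnR]; linarith
    linarith
  -- q in Icc
  have hq0 : 0 ≤ q := div_nonneg (by linarith) (by linarith)
  have hq1 : q ≤ 1 := by
    rw [hq, div_le_one ha2]; linarith
  have hqmem : q ∈ Set.Icc (0:ℝ) 1 := ⟨hq0, hq1⟩
  -- values at q
  have hfq : q * a + (1 - q) * (1 - a) = A := by
    rw [hq, div_eq_mul_inv]; have hinv : (2*a-1) * (2*a-1)⁻¹ = 1 := mul_inv_cancel₀ ha2.ne'; linear_combination (A - (1 - a)) * hinv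
  have hhq : q * (1 - a) + (1 - q) * a = 1 - A := by
    rw [hq, div_eq_mul_inv]; have hinv : (2*a-1) * (2*a-1)⁻¹ = 1 := mul_inv_cancel₀ ha2.ne'; linear_combination (-(A - (1 - a))) * hinv
  -- max property
  have hmax : ∀ r ∈ Set.Icc (0:ℝ) 1, g r ≤ g q := by
    intro r hr
    obtain ⟨hr0, hr1⟩ := hr
    have hfr : 0 < r * a + (1 - r) * (1 - a) := by nlinarith
    have hhr : 0 < r * (1 - a) + (1 - r) * a := by nlinarith
    have key1 : Real.log (r * a + (1 - r) * (1 - a)) - Real.log A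
        ≤ (r * a + (1 - r) * (1 - a)) / A - 1 := by
      rw [← Real.log_div hfr.ne' hApos.ne']
      exact Real.log_le_sub_one_of_pos (div_pos hfr hApos)
    have key2 : Real.log (r * (1 - a) + (1 - r) * a) - Real.log (1 - A)
        ≤ (r * (1 - a) + (1 - r) * a) / (1 - A) - 1 := by
      rw [← Real.log_div hhr.ne' (by linarith : (0:ℝ) < 1 - A).ne']
      exact Real.log_le_sub_one_of_pos (div_pos hhr (by linarith))
    have hAeq : A * n = n₁ := by rw [hA]; field_simp
    have hAeq' : (1 - A) * n = n - n₁ := by rw [hA]; field_simp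
    have hsum : (r * a + (1 - r) * (1 - a)) + (r * (1 - a) + (1 - r) * a) = 1 := by ring
    simp only [g, hfq, hhq]
    have e1 : (n₁:ℝ) * ((r * a + (1 - r) * (1 - a)) / A - 1)
        = n * (r * a + (1 - r) * (1 - a)) - n₁ := by
      field_simp
      nlinarith [hAeq]
    have e2 : ((n:ℝ) - n₁) * ((r * (1 - a) + (1 - r) * a) / (1 - A) - 1)
        = n * (r * (1 - a) + (1 - r) * a) - (n - n₁) := by
      have h1A : (0:ℝ) < 1 - A := by linarith
      field_simp
      nlinarith [hAeq']
    nlinarith [key1, key2, mul_le_mul_of_nonneg_left key1 hn₁pos.le,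
      mul_le_mul_of_nonneg_left key2 (by linarith : (0:ℝ) ≤ (n:ℝ) - n₁)]
  -- strict via midpoint
  clear_value g
  have hmid := hconc.2 hp hqmem hne (by norm_num : (0:ℝ) < 1/2) (by norm_num : (0:ℝ) < 1/2) (by norm_num)
  have hmidmem : (1/2 : ℝ) • p + (1/2 : ℝ) • q ∈ Set.Icc (0:ℝ) 1 :=
    (convex_Icc 0 1) hp hqmem (by norm_num) (by norm_num) (by norm_num)
  have := hmax _ hmidmem
  simp only [smul_eq_mul] at hmid this
  linarith [hmax p hp]
end

section
/- Let a ∈ (1/2, 1), n ≥ 1, and suppose n₁/n > a. Then the strictly concave function g(p) = n₁·log(pa + (1−p)(1−a)) + (n−n₁)·log(p(1−a) + (1−p)a) on [0,1] is maximized at the boundary point p = 1. -/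
/-!
Writing `x = p a + (1 - p)(1 - a)` for the probability of observing a one, the log-likelihood is
`n₁ log x + (n - n₁) log (1 - x)`, a concave function of `x` whose tangent at `x = a` has slope
`(n₁ - n a) / (a (1 - a)) > 0`. Since `a ≥ 1/2`, every `p ∈ [0, 1]` gives `x ≤ a`, with equality at
`p = 1`, so the tangent line already shows that nothing beats `x = a`.
-/

open Real

theorem Real.log_le_log_add_sub_div {x c : ℝ} (hx : 0 < x) (hc : 0 < c) :
    log x ≤ log c + (x - c) / c := by
  have h := log_le_sub_one_of_pos (div_pos hx hc)
  rw [log_div hx.ne' hc.ne'] at h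
  rw [sub_div, div_self hc.ne']
  linarith

theorem mul_log_add_mul_log_one_sub_le {u v x a : ℝ} (hu : 0 ≤ u) (hv : 0 ≤ v) (hx : 0 < x)
    (hxa : x ≤ a) (ha1 : a < 1) (hslope : v * a ≤ u * (1 - a)) :
    u * log x + v * log (1 - x) ≤ u * log a + v * log (1 - a) := by
  have ha : 0 < a := hx.trans_le hxa
  have ha' : 0 < 1 - a := by linarith
  have tangent_x := mul_le_mul_of_nonneg_left (log_le_log_add_sub_div hx ha) hu
  have h1x : 0 < 1 - x := by linarith
  have tangent_1x := mul_le_mul_of_nonneg_left (log_le_log_add_sub_div h1x ha') hv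
  have slope_term : u * ((x - a) / a) + v * ((1 - x - (1 - a)) / (1 - a)) ≤ 0 := by
    have e : u * ((x - a) / a) + v * ((1 - x - (1 - a)) / (1 - a)) =
        (x - a) * (u * (1 - a) - v * a) / (a * (1 - a)) := by
      field_simp
      ring
    rw [e]
    exact div_nonpos_of_nonpos_of_nonneg
      (mul_nonpos_of_nonpos_of_nonneg (by linarith) (by linarith)) (by positivity)
  linarith

theorem mixture_pos_and_le {p a : ℝ} (hp0 : 0 ≤ p) (hp1 : p ≤ 1) (ha : 1 / 2 ≤ a) (ha1 : a < 1) :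
    0 < p * a + (1 - p) * (1 - a) ∧ p * a + (1 - p) * (1 - a) ≤ a := by
  constructor <;> nlinarith

theorem da_loglik_boundary_max_general (a : ℝ) (ha : 1/2 < a) (ha1 : a < 1)
    (n n₁ : ℕ) (h : n₁ ≤ n) (hfrac : a < (n₁ : ℝ) / n) :
    let g : ℝ → ℝ := fun p =>
      (n₁ : ℝ) * Real.log (p * a + (1 - p) * (1 - a)) +
      ((n : ℝ) - n₁) * Real.log (p * (1 - a) + (1 - p) * a)
    ∀ p ∈ Set.Icc (0:ℝ) 1, g p ≤ g 1 := by
  intro g p ⟨hp0, hp1⟩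
  obtain ⟨hx, hxa⟩ := mixture_pos_and_le hp0 hp1 ha.le ha1
  have hna : (n : ℝ) * a ≤ n₁ := by
    rw [mul_comm]
    exact mul_le_of_le_div₀ (Nat.cast_nonneg _) (Nat.cast_nonneg _) hfrac.le
  have hy : p * (1 - a) + (1 - p) * a = 1 - (p * a + (1 - p) * (1 - a)) := by ring
  simp only [g, hy, one_mul, sub_self, zero_mul, add_zero]
  refine mul_log_add_mul_log_one_sub_le (Nat.cast_nonneg _) ?_ hx hxa ha1 (by linarith)
  exact sub_nonneg.mpr (Nat.cast_le.mpr h)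

/-- When the observed fraction of ones exceeds a, the D-assumption log-likelihood
is maximized at the boundary p = 1. -/
theorem da_loglik_boundary_max (a : ℝ) (ha : 1/2 < a) (ha1 : a < 1)
    (n n₁ : ℕ) (hn : 1 ≤ n) (h : n₁ ≤ n) (hfrac : a < (n₁ : ℝ) / n) :
    let g : ℝ → ℝ := fun p =>
      (n₁ : ℝ) * Real.log (p * a + (1 - p) * (1 - a)) +
      ((n : ℝ) - n₁) * Real.log (p * (1 - a) + (1 - p) * a)
    ∀ p ∈ Set.Icc (0:ℝ) 1, g p ≤ g 1 :=
  da_loglik_boundary_max_general a ha ha1 n n₁ h hfrac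
end

section
/- Let a ∈ (1/2, 1), r ∈ (0,1), q ∈ [0, 1/2), f(q) = qa + (1−q)(1−a), and q̂ₙ^LA = 1/(1 + ((1−r)/r)(a/(1−a))^{n − 2N₁⁽ⁿ⁾}) with N₁⁽ⁿ⁾ ~ Binomial(n, f(q)). Then E[q̂ₙ^LA] → 0 as n → ∞; in particular if q > 0 the asymptotic bias |lim E[q̂ₙ^LA] − q| = q > 0. -/
open Finset Filter

lemma aux_binom_sum (f : ℝ) (n : ℕ) :
    ∑ k ∈ Finset.range (n+1), (n.choose k : ℝ) * f^k * (1-f)^(n-k) = 1 := by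
  have h := add_pow f (1-f) n
  simp only [add_sub_cancel, one_pow] at h
  calc ∑ k ∈ Finset.range (n+1), (n.choose k : ℝ) * f^k * (1-f)^(n-k)
      = ∑ k ∈ Finset.range (n+1), f^k * (1-f)^(n-k) * (n.choose k : ℝ) :=
        Finset.sum_congr rfl fun k _ => by ring
    _ = 1 := h.symm

lemma aux_binom_var (f : ℝ) (n : ℕ) :
    ∑ k ∈ Finset.range (n+1), (n.choose k : ℝ) * f^k * (1-f)^(n-k) * ((n:ℝ)*f - k)^2
      = n * f * (1-f) := by
  have h := bernsteinPolynomial.variance ℝ n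
  apply_fun Polynomial.eval f at h
  simp only [Polynomial.eval_finset_sum, bernsteinPolynomial, Polynomial.eval_mul,
    Polynomial.eval_pow, Polynomial.eval_sub, Polynomial.eval_smul, Polynomial.eval_natCast,
    Polynomial.eval_X, Polynomial.eval_one, smul_eq_mul, nsmul_eq_mul] at h
  rw [← h]
  exact Finset.sum_congr rfl fun k _ => by ring

/-- The key analytic lemma, with an opaque `f`. -/
lemma aux_main (a r q f : ℝ) (ha : 1/2 < a) (ha1 : a < 1)
    (hr0 : 0 < r) (hr1 : r < 1) (hf0 : 0 < f) (hfh : f < 1/2) :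
    Tendsto (fun n : ℕ =>
      ∑ k ∈ Finset.range (n + 1),
        (n.choose k : ℝ) * f ^ k * (1 - f) ^ (n - k) *
          (1 / (1 + ((1 - r) / r) * (a / (1 - a)) ^ ((n : ℤ) - 2 * (k : ℤ)))))
      atTop (nhds 0) := by
  have ha0 : (0:ℝ) < 1 - a := by linarith
  have hf1 : f < 1 := by linarith
  set c : ℝ := (f + 1/2)/2 with hc_def
  have hfc : f < c := by rw [hc_def]; linarith
  have hc2 : c < 1/2 := by rw [hc_def]; linarith
  set b : ℝ := a / (1 - a) with hb_def
  have hb : 1 < b := (one_lt_div ha0).2 (by linarith)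
  have hbpos : 0 < b := lt_trans one_pos hb
  set C : ℝ := (1 - r) / r with hC_def
  have hC : 0 < C := div_pos (by linarith) hr0
  set β : ℝ := b ^ (2*c - 1 : ℝ) with hβ_def
  have hβ0 : 0 < β := Real.rpow_pos_of_pos hbpos _
  have hβ1 : β < 1 := Real.rpow_lt_one_of_one_lt_of_neg hb (by linarith)
  set K : ℝ := f * (1 - f) / (c - f)^2 with hK_def
  have hK0 : 0 ≤ K :=
    div_nonneg (mul_nonneg hf0.le (by linarith)) (sq_nonneg _)
  have hP0 : ∀ n k : ℕ, 0 ≤ (n.choose k : ℝ) * f^k * (1-f)^(n-k) := fun n k => by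
    have h2 : (0:ℝ) ≤ 1 - f := by linarith
    positivity
  have hden : ∀ n k : ℕ, 0 < C * b ^ ((n : ℤ) - 2 * (k : ℤ)) := fun n k =>
    mul_pos hC (zpow_pos hbpos _)
  have hg0 : ∀ n k : ℕ, 0 ≤ 1 / (1 + C * b ^ ((n : ℤ) - 2 * (k : ℤ))) := fun n k => by
    have := hden n k
    positivity
  have hg1 : ∀ n k : ℕ, 1 / (1 + C * b ^ ((n : ℤ) - 2 * (k : ℤ))) ≤ 1 := fun n k => by
    have := hden n k
    rw [div_le_one (by linarith)]; linarith
  apply squeeze_zero' (g := fun n : ℕ => (1/C) * β^n + K * (1/(n:ℝ)))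
  · filter_upwards with n
    exact Finset.sum_nonneg fun k _ => mul_nonneg (hP0 n k) (hg0 n k)
  · filter_upwards [eventually_ge_atTop 1] with n hn
    have hn0 : (0:ℝ) < n := by exact_mod_cast hn
    have hcf : 0 < c - f := by linarith
    calc ∑ k ∈ Finset.range (n + 1),
            (n.choose k : ℝ) * f ^ k * (1 - f) ^ (n - k) *
              (1 / (1 + C * b ^ ((n : ℤ) - 2 * (k : ℤ))))
        = (∑ k ∈ (Finset.range (n+1)).filter (fun k : ℕ => (k:ℝ) ≤ c * n),
              (n.choose k : ℝ) * f ^ k * (1 - f) ^ (n - k) *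
                (1 / (1 + C * b ^ ((n : ℤ) - 2 * (k : ℤ)))))
          + ∑ k ∈ (Finset.range (n+1)).filter (fun k : ℕ => ¬ ((k:ℝ) ≤ c * n)),
              (n.choose k : ℝ) * f ^ k * (1 - f) ^ (n - k) *
                (1 / (1 + C * b ^ ((n : ℤ) - 2 * (k : ℤ)))) :=
          (Finset.sum_filter_add_sum_filter_not _ _ _).symm
      _ ≤ (1/C) * β^n + K * (1/(n:ℝ)) := by
          apply add_le_add
          · -- small-k part
            calc ∑ k ∈ (Finset.range (n+1)).filter (fun k : ℕ => (k:ℝ) ≤ c * n),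
                    (n.choose k : ℝ) * f ^ k * (1 - f) ^ (n - k) *
                      (1 / (1 + C * b ^ ((n : ℤ) - 2 * (k : ℤ))))
                ≤ ∑ k ∈ (Finset.range (n+1)).filter (fun k : ℕ => (k:ℝ) ≤ c * n),
                    (n.choose k : ℝ) * f ^ k * (1 - f) ^ (n - k) * ((1/C) * β^n) := by
                  apply Finset.sum_le_sum
                  intro k hk
                  rw [Finset.mem_filter] at hk
                  apply mul_le_mul_of_nonneg_left _ (hP0 n k)
                  have h1 : 1 / (1 + C * b ^ ((n : ℤ) - 2 * (k : ℤ)))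
                      ≤ 1 / (C * b ^ ((n : ℤ) - 2 * (k : ℤ))) := by
                    apply one_div_le_one_div_of_le (hden n k)
                    linarith
                  have h2 : (1:ℝ) / (C * b ^ ((n : ℤ) - 2 * (k : ℤ)))
                      = (1/C) * b ^ ((2 * (k : ℤ) - n : ℤ)) := by
                    rw [one_div, mul_inv, ← zpow_neg]
                    ring_nf
                  have h3 : b ^ ((2 * (k : ℤ) - n : ℤ)) ≤ β ^ n := by
                    have e1 : b ^ ((2 * (k : ℤ) - n : ℤ))
                        = b ^ (((2 * (k : ℤ) - n : ℤ) : ℝ)) := by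
                      rw [Real.rpow_intCast]
                    have e2 : β ^ n = b ^ ((2*c - 1) * n) := by
                      rw [hβ_def, ← Real.rpow_natCast (b ^ (2*c-1 : ℝ)) n,
                        ← Real.rpow_mul hbpos.le]
                    rw [e1, e2]
                    apply Real.rpow_le_rpow_of_exponent_le hb.le
                    push_cast
                    linarith [hk.2]
                  calc 1 / (1 + C * b ^ ((n : ℤ) - 2 * (k : ℤ)))
                      ≤ 1 / (C * b ^ ((n : ℤ) - 2 * (k : ℤ))) := h1
                    _ = (1/C) * b ^ ((2 * (k : ℤ) - n : ℤ)) := h2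
                    _ ≤ (1/C) * β ^ n :=
                        mul_le_mul_of_nonneg_left h3 (by positivity)
              _ = ((1/C) * β^n) * ∑ k ∈ (Finset.range (n+1)).filter
                    (fun k : ℕ => (k:ℝ) ≤ c * n),
                    (n.choose k : ℝ) * f ^ k * (1 - f) ^ (n - k) := by
                  rw [Finset.mul_sum]
                  exact Finset.sum_congr rfl fun k _ => by ring
              _ ≤ ((1/C) * β^n) * 1 := by
                  apply mul_le_mul_of_nonneg_left _ (by positivity)
                  calc ∑ k ∈ (Finset.range (n+1)).filter (fun k : ℕ => (k:ℝ) ≤ c * n),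
                        (n.choose k : ℝ) * f ^ k * (1 - f) ^ (n - k)
                      ≤ ∑ k ∈ Finset.range (n+1),
                          (n.choose k : ℝ) * f ^ k * (1 - f) ^ (n - k) :=
                        Finset.sum_le_sum_of_subset_of_nonneg (Finset.filter_subset _ _)
                          (fun k _ _ => hP0 n k)
                    _ = 1 := aux_binom_sum f n
              _ = (1/C) * β^n := mul_one _
          · -- tail part via Chebyshev
            calc ∑ k ∈ (Finset.range (n+1)).filter (fun k : ℕ => ¬ ((k:ℝ) ≤ c * n)),
                    (n.choose k : ℝ) * f ^ k * (1 - f) ^ (n - k) *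
                      (1 / (1 + C * b ^ ((n : ℤ) - 2 * (k : ℤ))))
                ≤ ∑ k ∈ (Finset.range (n+1)).filter (fun k : ℕ => ¬ ((k:ℝ) ≤ c * n)),
                    (n.choose k : ℝ) * f ^ k * (1 - f) ^ (n - k) *
                      (((n:ℝ)*f - k)^2 / ((n:ℝ)*(c - f))^2) := by
                  apply Finset.sum_le_sum
                  intro k hk
                  rw [Finset.mem_filter] at hk
                  have hck : c * n < k := lt_of_not_ge hk.2
                  apply mul_le_mul_of_nonneg_left _ (hP0 n k)
                  have hd : ((n:ℝ)*(c - f)) ≤ (k:ℝ) - n*f := by nlinarith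
                  have hd0 : (0:ℝ) ≤ (n:ℝ)*(c - f) := by positivity
                  have hsq : ((n:ℝ)*(c - f))^2 ≤ ((k:ℝ) - n*f)^2 :=
                    pow_le_pow_left₀ hd0 hd 2
                  have hsq' : ((k:ℝ) - n*f)^2 = ((n:ℝ)*f - k)^2 := by ring
                  calc 1 / (1 + C * b ^ ((n : ℤ) - 2 * (k : ℤ))) ≤ 1 := hg1 n k
                    _ ≤ ((n:ℝ)*f - k)^2 / ((n:ℝ)*(c - f))^2 := by
                        rw [le_div_iff₀ (by positivity), one_mul, ← hsq']
                        exact hsq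
              _ ≤ ∑ k ∈ Finset.range (n+1),
                    (n.choose k : ℝ) * f ^ k * (1 - f) ^ (n - k) *
                      (((n:ℝ)*f - k)^2 / ((n:ℝ)*(c - f))^2) := by
                  apply Finset.sum_le_sum_of_subset_of_nonneg (Finset.filter_subset _ _)
                  intro k _ _
                  have := hP0 n k
                  positivity
              _ = (∑ k ∈ Finset.range (n+1),
                    (n.choose k : ℝ) * f ^ k * (1 - f) ^ (n - k) * ((n:ℝ)*f - k)^2)
                    / ((n:ℝ)*(c - f))^2 := by
                  rw [Finset.sum_div]
                  exact Finset.sum_congr rfl fun k _ => by ring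
              _ = ((n:ℝ) * f * (1-f)) / ((n:ℝ)*(c - f))^2 := by rw [aux_binom_var f n]
              _ = K * (1/(n:ℝ)) := by
                  rw [hK_def]
                  field_simp
  · -- the bound tends to 0
    have t1 : Tendsto (fun n : ℕ => (1/C) * β^n) atTop (nhds 0) := by
      have := (tendsto_pow_atTop_nhds_zero_of_lt_one hβ0.le hβ1).const_mul (1/C)
      simpa using this
    have t2 : Tendsto (fun n : ℕ => K * (1/(n:ℝ))) atTop (nhds 0) := by
      have := tendsto_one_div_atTop_nhds_zero_nat.const_mul K
      simpa using this
    simpa using t1.add t2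

/-- When q < 1/2, E[q̂ₙ^LA] → 0; in particular for q > 0 the asymptotic bias
|0 − q| = q is positive. -/
theorem la_posterior_expectation_tendsto_zero (a r q : ℝ) (ha : 1/2 < a) (ha1 : a < 1)
    (hr0 : 0 < r) (hr1 : r < 1) (hq0 : 0 ≤ q) (hq : q < 1/2) :
    let f : ℝ := q * a + (1 - q) * (1 - a)
    Tendsto (fun n : ℕ =>
      ∑ k ∈ Finset.range (n + 1),
        (n.choose k : ℝ) * f ^ k * (1 - f) ^ (n - k) *
          (1 / (1 + ((1 - r) / r) * (a / (1 - a)) ^ ((n : ℤ) - 2 * (k : ℤ)))))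
      atTop (nhds 0) ∧
    (0 < q → |(0 : ℝ) - q| = q ∧ 0 < |(0 : ℝ) - q|) := by
  intro f
  have hf0 : 0 < f := by
    have h1 : 0 ≤ q * a := mul_nonneg hq0 (by linarith)
    have h2 : 0 < (1 - q) * (1 - a) := mul_pos (by linarith) (by linarith)
    show 0 < q * a + (1 - q) * (1 - a)
    linarith
  have hfh : f < 1/2 := by
    have h3 : 0 < (1/2 - q) * (2*a - 1) := mul_pos (by linarith) (by linarith)
    show q * a + (1 - q) * (1 - a) < 1/2
    nlinarith
  refine ⟨aux_main a r q f ha ha1 hr0 hr1 hf0 hfh, fun hq' => ?_⟩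
  constructor
  · rw [zero_sub, abs_neg, abs_of_pos hq']
  · rw [zero_sub, abs_neg, abs_of_pos hq']; exact hq'
end
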